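/- arXiv:2510.22574 — 6 statements merged into one kernel-verified Lean document; each statement's English description precedes it below -/
import Mathlib

section
/- Let W_n be the squared cycle graph on ZMod n and let k ≥ 1. If n ≥ 3k+1, then every subset A ⊆ ZMod n with |A| = 3k - 2 contains an independent set of size k in W_n. -/
/-- The squared cycle graph `W n` on `ZMod n`: edges between `i, i+1` and `i, i+2`. -/
def squaredCycle (n : ℕ) : SimpleGraph (ZMod n) where
  Adj a b := a ≠ b ∧ (b = a + 1 ∨ a = b + 1 ∨ b = a + 2 ∨ a = b + 2)
  symm := ⟨by rintro a b ⟨hne, h⟩; exact ⟨hne.symm, by tauto⟩⟩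
  loopless := ⟨by rintro a ⟨hne, -⟩; exact hne rfl⟩

/-- `S` is an independent set in the squared cycle graph on `ZMod n`. -/
def IsIndepSet (n : ℕ) (S : Finset (ZMod n)) : Prop :=
  ∀ a ∈ S, ∀ b ∈ S, ¬ (squaredCycle n).Adj a b

/-- `σ` is a face of the `k`-total cut complex of `squaredCycle n`:
its complement contains an independent set of size `k`. -/
def IsFace (n k : ℕ) (σ : Finset (ZMod n)) : Prop :=
  ∃ S : Finset (ZMod n), Disjoint S σ ∧ S.card = k ∧ IsIndepSet n S

/- ### Auxiliary lemmas -/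

lemma getD_lt_getD {L : List ℕ} (h : L.Pairwise (· < ·)) {i j : ℕ} (hij : i < j)
    (hj : j < L.length) : L.getD i 0 < L.getD j 0 := by
  rw [List.getD_eq_getElem _ _ (hij.trans hj), List.getD_eq_getElem _ _ hj]
  exact List.pairwise_iff_getElem.mp h _ _ _ _ hij

lemma getD_add_le {L : List ℕ} (h : L.Pairwise (· < ·)) (i t : ℕ)
    (ht : i + t < L.length) : L.getD i 0 + t ≤ L.getD (i + t) 0 := by
  induction t with
  | zero => simp
  | succ t ih =>
    have h1 := ih (by omega)
    have h2 : L.getD (i + t) 0 < L.getD (i + t + 1) 0 :=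
      getD_lt_getD h (by omega) (by omega)
    have : i + (t + 1) = i + t + 1 := by omega
    rw [this]
    omega

lemma select (n k : ℕ) (B : Finset ℕ) (hk : 1 ≤ k)
    (hB : ∀ b ∈ B, b < n) (L : List ℕ) (hLeq : L = B.sort (· ≤ ·)) (ι : ℕ → ℕ)
    (hrange : ∀ j, j < k → ι j < L.length)
    (hstep : ∀ j, j + 1 < k → L.getD (ι j) 0 + 3 ≤ L.getD (ι (j + 1)) 0)
    (hwrap : L.getD (ι (k - 1)) 0 + 3 ≤ n + L.getD (ι 0) 0) :
    ∃ S : Finset ℕ, S ⊆ B ∧ S.card = k ∧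
      ∀ u ∈ S, ∀ v ∈ S, u < v → 3 ≤ v - u ∧ v - u + 3 ≤ n := by
  set g : ℕ → ℕ := fun j => L.getD (ι j) 0 with hg
  have hstep' : ∀ j, j + 1 < k → g j + 3 ≤ g (j + 1) := hstep
  have hwrap' : g (k - 1) + 3 ≤ n + g 0 := hwrap
  have chain : ∀ j i, i < j → j < k → g i + 3 ≤ g j := by
    intro j
    induction j with
    | zero => omega
    | succ m ih =>
      intro i hi hk'
      have h2 := hstep' m hk'
      rcases Nat.lt_succ_iff_lt_or_eq.mp hi with h | h
      · have := ih i h (by omega); omega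
      · subst h; omega
  have gmem : ∀ j, j < k → g j ∈ B := by
    intro j hj
    have hr := hrange j hj
    have hmem : g j ∈ L := by
      rw [hg]
      simp only
      rw [List.getD_eq_getElem _ _ hr]
      exact List.getElem_mem _
    rw [hLeq] at hmem
    exact (Finset.mem_sort _).mp hmem
  have gmono : ∀ i j, i ≤ j → j < k → g i ≤ g j := by
    intro i j hij hj
    rcases Nat.eq_or_lt_of_le hij with rfl | h
    · exact le_rfl
    · have := chain j i h hj; omega
  refine ⟨(Finset.range k).image g, ?_, ?_, ?_⟩
  · intro x hx
    obtain ⟨j, hj, rfl⟩ := Finset.mem_image.mp hx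
    exact gmem j (Finset.mem_range.mp hj)
  · rw [Finset.card_image_of_injOn, Finset.card_range]
    intro i hi j hj hij
    simp only [Finset.coe_range, Set.mem_Iio] at hi hj
    rcases lt_trichotomy i j with h | h | h
    · have := chain j i h hj; omega
    · exact h
    · have := chain i j h hi; omega
  · intro u hu v hv huv
    obtain ⟨i, hi, rfl⟩ := Finset.mem_image.mp hu
    obtain ⟨j, hj, rfl⟩ := Finset.mem_image.mp hv
    rw [Finset.mem_range] at hi hj
    rcases lt_trichotomy i j with h | h | h
    · have h1 := chain j i h hj
      have h3 : g j ≤ g (k - 1) := gmono j (k - 1) (by omega) (by omega)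
      have h4 : g 0 ≤ g i := gmono 0 i (by omega) hi
      omega
    · subst h; omega
    · have := chain i j h hi; omega

lemma adj_shift {n : ℕ} (r x y : ZMod n) (h : (squaredCycle n).Adj x y) :
    (squaredCycle n).Adj (x - r) (y - r) := by
  obtain ⟨hne, hc⟩ := h
  refine ⟨fun he => hne (by have := sub_left_injective (G := ZMod n) he; exact this), ?_⟩
  rcases hc with h | h | h | h
  · left; rw [h]; ring
  · right; left; rw [h]; ring
  · right; right; left; rw [h]; ring
  · right; right; right; rw [h]; ring

lemma not_adj {n : ℕ} [NeZero n] (hn : 4 ≤ n) {x y : ZMod n}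
    (h1 : 3 ≤ y.val - x.val) (h2 : y.val - x.val + 3 ≤ n) (hlt : x.val < y.val) :
    ¬ (squaredCycle n).Adj x y := by
  rintro ⟨hne, hc⟩
  have hxv := ZMod.val_lt x
  have hyv := ZMod.val_lt y
  have key : ∀ a b : ZMod n, ∀ c : ℕ, c < n → b = a + (c : ZMod n) →
      b.val = (a.val + c) % n := by
    intro a b c hc h
    rw [h, ZMod.val_add, ZMod.val_cast_of_lt hc]
  have e1 : (1 : ZMod n) = ((1 : ℕ) : ZMod n) := by norm_cast
  have e2 : (2 : ZMod n) = ((2 : ℕ) : ZMod n) := by norm_cast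
  have modfact : ∀ a : ℕ, a < n + n → a % n = a ∨ (n ≤ a ∧ a % n = a - n) := by
    intro a ha
    rcases Nat.lt_or_ge a n with h' | h'
    · left; exact Nat.mod_eq_of_lt h'
    · right
      exact ⟨h', by rw [Nat.mod_eq_sub_mod h', Nat.mod_eq_of_lt (by omega)]⟩
  rcases hc with h | h | h | h
  · have hv := key x y 1 (by omega) (by rw [h, e1])
    have := modfact (x.val + 1) (by omega); omega
  · have hv := key y x 1 (by omega) (by rw [h, e1])
    have := modfact (y.val + 1) (by omega); omega
  · have hv := key x y 2 (by omega) (by rw [h, e2])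
    have := modfact (x.val + 2) (by omega); omega
  · have hv := key y x 2 (by omega) (by rw [h, e2])
    have := modfact (y.val + 2) (by omega); omega

lemma convert (n k : ℕ) [NeZero n] (hn4 : 4 ≤ n) (r : ZMod n) (A : Finset (ZMod n))
    (SN : Finset ℕ) (hsub : SN ⊆ A.image (fun x => (x - r).val)) (hcard : SN.card = k)
    (hsep : ∀ u ∈ SN, ∀ v ∈ SN, u < v → 3 ≤ v - u ∧ v - u + 3 ≤ n) :
    ∃ S ⊆ A, S.card = k ∧ IsIndepSet n S := by
  have hlt : ∀ u ∈ SN, u < n := by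
    intro u hu
    obtain ⟨x, -, hx⟩ := Finset.mem_image.mp (hsub hu)
    rw [← hx]; exact ZMod.val_lt _
  set g : ℕ → ZMod n := fun v => r + (v : ZMod n) with hg
  have hval : ∀ w : ℕ, w < n → (g w - r).val = w := by
    intro w hw
    rw [hg]
    simp only
    rw [add_sub_cancel_left]
    exact ZMod.val_cast_of_lt hw
  have hginj : Set.InjOn g SN := by
    intro u hu v hv huv
    have h1 := hval u (hlt u hu)
    have h2 := hval v (hlt v hv)
    rw [huv] at h1
    rw [h1] at h2
    omega
  refine ⟨SN.image g, ?_, ?_, ?_⟩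
  · intro x hx
    obtain ⟨v, hv, rfl⟩ := Finset.mem_image.mp hx
    obtain ⟨y, hyA, hy⟩ := Finset.mem_image.mp (hsub hv)
    have hgv : g v = y := by
      rw [hg]
      simp only
      rw [← hy, ZMod.natCast_rightInverse (y - r)]
      ring
    rwa [hgv]
  · rw [Finset.card_image_of_injOn hginj, hcard]
  · intro a ha b hb
    obtain ⟨u, hu, rfl⟩ := Finset.mem_image.mp ha
    obtain ⟨v, hv, rfl⟩ := Finset.mem_image.mp hb
    have hun := hlt u hu
    have hvn := hlt v hv
    rcases lt_trichotomy u v with h | h | h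
    · intro hadj
      have hadj' := adj_shift r _ _ hadj
      obtain ⟨hs1, hs2⟩ := hsep u hu v hv h
      exact not_adj hn4 (by rw [hval u hun, hval v hvn]; exact hs1)
        (by rw [hval u hun, hval v hvn]; exact hs2)
        (by rw [hval u hun, hval v hvn]; exact h) hadj'
    · subst h
      rintro ⟨hne, -⟩; exact hne rfl
    · intro hadj
      have hadj' := adj_shift r _ _ ((squaredCycle n).adj_symm hadj)
      obtain ⟨hs1, hs2⟩ := hsep v hv u hu h
      exact not_adj hn4 (by rw [hval u hun, hval v hvn]; exact hs1)
        (by rw [hval u hun, hval v hvn]; exact hs2)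
        (by rw [hval u hun, hval v hvn]; exact h) hadj'

theorem stmt1 (n k : ℕ) (hk : 1 ≤ k) (hn : 3 * k + 1 ≤ n)
    (A : Finset (ZMod n)) (hA : A.card = 3 * k - 2) :
    ∃ S ⊆ A, S.card = k ∧ IsIndepSet n S := by
  haveI : NeZero n := ⟨by omega⟩
  have hn4 : 4 ≤ n := by omega
  have hAne : A.Nonempty := by
    rw [← Finset.card_pos, hA]; omega
  rcases Nat.eq_or_lt_of_le hk with hk1 | hk2
  · -- k = 1
    obtain ⟨a, ha⟩ := hAne
    refine ⟨{a}, by simpa using ha, by rw [← hk1]; simp, ?_⟩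
    intro x hx y hy
    simp only [Finset.mem_singleton] at hx hy
    subst hx; subst hy
    rintro ⟨hne, -⟩; exact hne rfl
  have hk2' : 2 ≤ k := hk2
  set m := 3 * k - 2 with hm
  -- find a rotation point r with r - 1 ∉ A
  have hrex : ∃ r ∈ A, r - 1 ∉ A := by
    by_contra hcon
    push_neg at hcon
    obtain ⟨a, ha⟩ := hAne
    have hstep : ∀ t : ℕ, a - (t : ZMod n) ∈ A := by
      intro t
      induction t with
      | zero => simpa using ha
      | succ t ih =>
        have h1 := hcon _ ih
        have he : a - ((t + 1 : ℕ) : ZMod n) = a - (t : ZMod n) - 1 := by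
          push_cast; ring
        rwa [he]
    have huniv : A = Finset.univ := by
      apply Finset.eq_univ_of_forall
      intro x
      have h1 := hstep (a - x).val
      rwa [ZMod.natCast_rightInverse (a - x), sub_sub_cancel] at h1
    rw [huniv, Finset.card_univ, ZMod.card] at hA
    omega
  obtain ⟨r, hrA, hr1⟩ := hrex
  set f : ZMod n → ℕ := fun x => (x - r).val with hf
  have hfinj : Function.Injective f := by
    intro a b h
    have h1 := ZMod.val_injective n h
    exact sub_left_injective h1
  set B := A.image f with hB
  have hBcard : B.card = m := by
    rw [hB, Finset.card_image_of_injective _ hfinj, hA]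
  have hBlt : ∀ b ∈ B, b < n := by
    intro b hb
    obtain ⟨x, -, rfl⟩ := Finset.mem_image.mp hb
    exact ZMod.val_lt _
  have hcast1 : ((n - 1 : ℕ) : ZMod n) = -1 := by
    rw [Nat.cast_sub (by omega : 1 ≤ n), ZMod.natCast_self]
    push_cast; ring
  have hcast2 : ((n - 2 : ℕ) : ZMod n) = -2 := by
    rw [Nat.cast_sub (by omega : 2 ≤ n), ZMod.natCast_self]
    push_cast; ring
  have hmemB : ∀ v : ℕ, v < n → (v ∈ B ↔ r + (v : ZMod n) ∈ A) := by
    intro v hv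
    constructor
    · intro hmem
      obtain ⟨x, hxA, hx⟩ := Finset.mem_image.mp hmem
      have h1 : ((f x : ℕ) : ZMod n) = x - r := ZMod.natCast_rightInverse (x - r)
      rw [hx] at h1
      have : r + (v : ZMod n) = x := by rw [h1]; ring
      rwa [this]
    · intro hmem
      refine Finset.mem_image.mpr ⟨r + (v : ZMod n), hmem, ?_⟩
      rw [hf]
      simp only
      rw [add_sub_cancel_left]
      exact ZMod.val_cast_of_lt hv
  have hn1B : (n - 1) ∉ B := by
    intro hmem
    have := (hmemB (n - 1) (by omega)).mp hmem
    rw [hcast1] at this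
    apply hr1
    have : r + -1 = r - 1 := by ring
    rwa [← this]
  have h0B : (0 : ℕ) ∈ B := by
    refine (hmemB 0 (by omega)).mpr ?_
    simpa using hrA
  set L := B.sort (· ≤ ·) with hLdef
  have hLs : L.Pairwise (· < ·) := (Finset.sortedLT_sort B).pairwise
  have hLlen : L.length = m := by rw [hLdef, Finset.length_sort, hBcard]
  have hgetmem : ∀ i, i < m → L.getD i 0 ∈ B := by
    intro i hi
    have hi' : i < L.length := by omega
    have : L.getD i 0 ∈ L := by
      rw [List.getD_eq_getElem _ _ hi']
      exact List.getElem_mem _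
    rw [hLdef] at this
    exact (Finset.mem_sort _).mp this
  -- the final step, shared by all cases
  have final : (∃ S : Finset ℕ, S ⊆ B ∧ S.card = k ∧
      ∀ u ∈ S, ∀ v ∈ S, u < v → 3 ≤ v - u ∧ v - u + 3 ≤ n) →
      ∃ S ⊆ A, S.card = k ∧ IsIndepSet n S := by
    rintro ⟨SN, hSNsub, hSNcard, hSNsep⟩
    rw [hB] at hSNsub
    exact convert n k hn4 r A SN hSNsub hSNcard hSNsep
  by_cases hr2 : r - 2 ∈ A
  · -- wrap gap is exactly 2
    have hn2B : (n - 2 : ℕ) ∈ B := by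
      refine (hmemB (n - 2) (by omega)).mpr ?_
      rw [hcast2]
      have : r + -2 = r - 2 := by ring
      rwa [this]
    have h0 : L.getD 0 0 = 0 := by
      have hmem : (0 : ℕ) ∈ L := by rw [hLdef]; exact (Finset.mem_sort _).mpr h0B
      obtain ⟨j, hj, hjeq⟩ := List.mem_iff_getElem.mp hmem
      have hj0 : L.getD j 0 = 0 := by rw [List.getD_eq_getElem _ _ hj, hjeq]
      rcases Nat.eq_zero_or_pos j with rfl | hpos
      · exact hj0
      · have := getD_lt_getD hLs hpos hj
        omega
    have hmax : L.getD (m - 1) 0 = n - 2 := by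
      have hble : ∀ b ∈ B, b ≤ n - 2 := by
        intro b hb
        have h1 := hBlt b hb
        have h2 : b ≠ n - 1 := fun h => hn1B (h ▸ hb)
        omega
      have hmem : (n - 2 : ℕ) ∈ L := by rw [hLdef]; exact (Finset.mem_sort _).mpr hn2B
      obtain ⟨j, hj, hjeq⟩ := List.mem_iff_getElem.mp hmem
      have hj2 : L.getD j 0 = n - 2 := by rw [List.getD_eq_getElem _ _ hj, hjeq]
      have h1 : L.getD (m - 1) 0 ≤ n - 2 := hble _ (hgetmem (m - 1) (by omega))
      rcases Nat.lt_or_ge j (m - 1) with hlt | hge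
      · have := getD_lt_getD hLs hlt (show m - 1 < L.length by omega)
        omega
      · have : j = m - 1 := by omega
        rw [← this]; omega
    -- there is an inner gap of size ≥ 2
    have hpgap : ∃ p, p + 1 < m ∧ L.getD p 0 + 2 ≤ L.getD (p + 1) 0 := by
      by_contra hcon
      push_neg at hcon
      have hub : ∀ t, t < m → L.getD t 0 ≤ t := by
        intro t
        induction t with
        | zero => intro _; omega
        | succ t ih =>
          intro h
          have h1 := hcon t (by omega)
          have h2 := ih (by omega)
          omega
      have := hub (m - 1) (by omega)
      omega
    obtain ⟨p, hp1, hp2⟩ := hpgap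
    -- a "wide window" at a position q with q % 3 ∈ {0, 1}
    have hq : ∃ q, (q % 3 = 0 ∨ q % 3 = 1) ∧ q + 2 < m ∧
        L.getD q 0 + 3 ≤ L.getD (q + 2) 0 := by
      by_cases hp3 : p % 3 = 0
      · refine ⟨p, Or.inl hp3, by omega, ?_⟩
        have := getD_lt_getD hLs (show p + 1 < p + 2 by omega)
          (show p + 2 < L.length by omega)
        omega
      · refine ⟨p - 1, by omega, by omega, ?_⟩
        have h1 := getD_lt_getD hLs (show p - 1 < p by omega)
          (show p < L.length by omega)
        have h2 : p - 1 + 2 = p + 1 := by omega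
        rw [h2]
        omega
    obtain ⟨q, hq3, hq2, hqval⟩ := hq
    rcases hq3 with hq0 | hq1
    · -- scheme: ι j = if 3j ≤ q then 3j else 3j - 1
      have hqle : q ≤ 3 * k - 6 := by omega
      apply final
      apply select n k B (by omega) hBlt L hLdef (fun j => if 3 * j ≤ q then 3 * j else 3 * j - 1)
      · intro j hj
        show (if 3 * j ≤ q then 3 * j else 3 * j - 1) < L.length
        split_ifs <;> omega
      · intro j hj
        show L.getD (if 3 * j ≤ q then 3 * j else 3 * j - 1) 0 + 3 ≤
          L.getD (if 3 * (j + 1) ≤ q then 3 * (j + 1) else 3 * (j + 1) - 1) 0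
        split_ifs with ha hb hb
        · have := getD_add_le hLs (3 * j) 3 (by omega)
          have he : 3 * (j + 1) = 3 * j + 3 := by ring
          rw [he]
          omega
        · have he1 : 3 * j = q := by omega
          have he2 : 3 * (j + 1) - 1 = q + 2 := by omega
          rw [he1, he2]
          exact hqval
        · omega
        · have := getD_add_le hLs (3 * j - 1) 3 (by omega)
          have he : 3 * (j + 1) - 1 = 3 * j - 1 + 3 := by omega
          rw [he]
          omega
      · show L.getD (if 3 * (k - 1) ≤ q then 3 * (k - 1) else 3 * (k - 1) - 1) 0 + 3 ≤
          n + L.getD (if 3 * 0 ≤ q then 3 * 0 else 3 * 0 - 1) 0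
        rw [if_neg (by omega), if_pos (by omega)]
        have h1 := getD_lt_getD hLs (show 3 * (k - 1) - 1 < m - 1 by omega)
          (show m - 1 < L.length by omega)
        have h2 : (3 * 0 : ℕ) = 0 := by norm_num
        rw [h2]
        omega
    · -- scheme: ι j = if 3j + 1 ≤ q then 3j + 1 else 3j
      have hqle : q ≤ 3 * k - 5 := by omega
      apply final
      apply select n k B (by omega) hBlt L hLdef
        (fun j => if 3 * j + 1 ≤ q then 3 * j + 1 else 3 * j)
      · intro j hj
        show (if 3 * j + 1 ≤ q then 3 * j + 1 else 3 * j) < L.length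
        split_ifs <;> omega
      · intro j hj
        show L.getD (if 3 * j + 1 ≤ q then 3 * j + 1 else 3 * j) 0 + 3 ≤
          L.getD (if 3 * (j + 1) + 1 ≤ q then 3 * (j + 1) + 1 else 3 * (j + 1)) 0
        split_ifs with ha hb hb
        · have := getD_add_le hLs (3 * j + 1) 3 (by omega)
          have he : 3 * (j + 1) + 1 = 3 * j + 1 + 3 := by ring
          rw [he]
          omega
        · have he1 : 3 * j + 1 = q := by omega
          have he2 : 3 * (j + 1) = q + 2 := by omega
          rw [he1, he2]
          exact hqval
        · omega
        · have := getD_add_le hLs (3 * j) 3 (by omega)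
          have he : 3 * (j + 1) = 3 * j + 3 := by ring
          rw [he]
          omega
      · show L.getD (if 3 * (k - 1) + 1 ≤ q then 3 * (k - 1) + 1 else 3 * (k - 1)) 0 + 3 ≤
          n + L.getD (if 3 * 0 + 1 ≤ q then 3 * 0 + 1 else 3 * 0) 0
        rw [if_neg (by omega), if_pos (by omega)]
        have h1 : 3 * (k - 1) = m - 1 := by omega
        rw [h1, hmax]
        have h2 : (3 * 0 + 1 : ℕ) = 1 := by norm_num
        rw [h2]
        have h3 := getD_lt_getD hLs (show 0 < 1 by omega) (show 1 < L.length by omega)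
        omega
  · -- wrap gap is ≥ 3 : take every third element
    have hn2B : (n - 2 : ℕ) ∉ B := by
      intro hmem
      have := (hmemB (n - 2) (by omega)).mp hmem
      rw [hcast2] at this
      apply hr2
      have he : r + -2 = r - 2 := by ring
      rwa [← he]
    apply final
    apply select n k B (by omega) hBlt L hLdef (fun j => 3 * j)
    · intro j hj
      show 3 * j < L.length
      omega
    · intro j hj
      show L.getD (3 * j) 0 + 3 ≤ L.getD (3 * (j + 1)) 0
      have := getD_add_le hLs (3 * j) 3 (by omega)
      have he : 3 * (j + 1) = 3 * j + 3 := by ring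
      rw [he]
      omega
    · show L.getD (3 * (k - 1)) 0 + 3 ≤ n + L.getD (3 * 0) 0
      have hmem := hgetmem (3 * (k - 1)) (by omega)
      have h1 := hBlt _ hmem
      have h2 : L.getD (3 * (k - 1)) 0 ≠ n - 1 := fun h => hn1B (h ▸ hmem)
      have h3 : L.getD (3 * (k - 1)) 0 ≠ n - 2 := fun h => hn2B (h ▸ hmem)
      omega
end

section
/- Let W_n be the squared cycle graph on ZMod n with n ≥ 3k+1 and k ≥ 1. Then every subset of ZMod n of cardinality at most n - 3k + 2 is a face of the k-total cut complex Δ_k^t(W_n), i.e., its complement contains an independent set of size k. -/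
lemma modeq_bound {n a b : ℕ} (h : a ≡ b [MOD n]) (h1 : a < b) (h2 : b < a + n) : False := by
  have hd := (Nat.modEq_iff_dvd' h1.le).mp h
  have := Nat.le_of_dvd (by omega) hd
  omega

lemma cast_sub_eq (n j : ℕ) (h : j ≤ n) : ((n - j : ℕ) : ZMod n) = -(j : ZMod n) := by
  rw [Nat.cast_sub h, ZMod.natCast_self]; ring

lemma exists_indep (n k : ℕ) (C : Finset (ZMod n)) (hn : 3*k+1 ≤ n)
    (u : ℕ → ℕ)
    (hmem : ∀ i, i < k → ((u i : ℕ) : ZMod n) ∈ C)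
    (hstep : ∀ i, i + 2 ≤ k → u i + 3 ≤ u (i+1))
    (hspan : u (k-1) + 3 ≤ u 0 + n) :
    ∃ S : Finset (ZMod n), S.card = k ∧ IsIndepSet n S ∧ ∀ x ∈ S, x ∈ C := by
  have hchain : ∀ d i, i + d < k → u i + 3*d ≤ u (i+d) := by
    intro d
    induction d with
    | zero => intro i _; simp
    | succ m ih =>
      intro i h
      have h1 := ih i (by omega)
      have h2 := hstep (i+m) (by omega)
      have e : i + (m+1) = (i+m)+1 := by omega
      rw [e]; omega
  have hlohi : ∀ i j, i < j → j < k → u i + 3 ≤ u j ∧ u j + 3 ≤ u i + n := by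
    intro i j hij hj
    have h1 := hchain (j-i) i (by omega)
    have e1 : i + (j-i) = j := by omega
    rw [e1] at h1
    have h2 := hchain (k-1-j) j (by omega)
    have e2 : j + (k-1-j) = k-1 := by omega
    rw [e2] at h2
    have h3 := hchain i 0 (by omega)
    have e3 : 0 + i = i := by omega
    rw [e3] at h3
    omega
  have hnadj : ∀ i j, i < j → j < k →
      ¬ (squaredCycle n).Adj ((u i : ℕ) : ZMod n) ((u j : ℕ) : ZMod n) := by
    intro i j hij hj hadj
    obtain ⟨hd1, hd2⟩ := hlohi i j hij hj
    obtain ⟨hne, hor⟩ := hadj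
    rcases hor with h | h | h | h
    · have : ((u j : ℕ) : ZMod n) = ((u i + 1 : ℕ) : ZMod n) := by push_cast; rw [h]
      have hm := (ZMod.natCast_eq_natCast_iff _ _ _).mp this
      exact modeq_bound hm.symm (by omega) (by omega)
    · have : ((u i : ℕ) : ZMod n) = ((u j + 1 : ℕ) : ZMod n) := by push_cast; rw [h]
      have hm := (ZMod.natCast_eq_natCast_iff _ _ _).mp this
      exact modeq_bound hm (by omega) (by omega)
    · have : ((u j : ℕ) : ZMod n) = ((u i + 2 : ℕ) : ZMod n) := by push_cast; rw [h]
      have hm := (ZMod.natCast_eq_natCast_iff _ _ _).mp this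
      exact modeq_bound hm.symm (by omega) (by omega)
    · have : ((u i : ℕ) : ZMod n) = ((u j + 2 : ℕ) : ZMod n) := by push_cast; rw [h]
      have hm := (ZMod.natCast_eq_natCast_iff _ _ _).mp this
      exact modeq_bound hm (by omega) (by omega)
  have hinj : ∀ i j, i < j → j < k → ((u i : ℕ) : ZMod n) ≠ ((u j : ℕ) : ZMod n) := by
    intro i j hij hj he
    obtain ⟨hd1, hd2⟩ := hlohi i j hij hj
    have hm := (ZMod.natCast_eq_natCast_iff _ _ _).mp he
    exact modeq_bound hm (by omega) (by omega)
  refine ⟨(Finset.range k).image (fun i => ((u i : ℕ) : ZMod n)), ?_, ?_, ?_⟩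
  · rw [Finset.card_image_of_injOn, Finset.card_range]
    intro i hi j hj he
    simp only [Finset.coe_range, Set.mem_Iio] at hi hj
    rcases lt_trichotomy i j with h | h | h
    · exact absurd he (hinj i j h hj)
    · exact h
    · exact absurd he.symm (hinj j i h hi)
  · intro a ha b hb
    simp only [Finset.mem_image, Finset.mem_range] at ha hb
    obtain ⟨i, hi, rfl⟩ := ha
    obtain ⟨j, hj, rfl⟩ := hb
    rcases lt_trichotomy i j with h | h | h
    · exact hnadj i j h hj
    · subst h; intro hadj; exact hadj.1 rfl
    · intro hadj; exact hnadj j i h hi hadj.symm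
  · intro x hx
    simp only [Finset.mem_image, Finset.mem_range] at hx
    obtain ⟨i, hi, rfl⟩ := hx
    exact hmem i hi

section Core
variable {n k r : ℕ} {T : Finset ℕ}

lemma coreA (hk : 1 ≤ k) (hr : r = 3*k - 2) (hT : T.card = r)
    (hbound : ∀ x ∈ T, x + 3 ≤ n) :
    ∃ u : ℕ → ℕ, (∀ i, i < k → u i ∈ T) ∧ (∀ i, i + 2 ≤ k → u i + 3 ≤ u (i+1)) ∧
      u (k-1) + 3 ≤ u 0 + n := by
  have hr1 : 1 ≤ r := by omega
  let c := T.orderEmbOfFin hT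
  let cc : ℕ → ℕ := fun i => if h : i < r then c ⟨i, h⟩ else 0
  have ccmem : ∀ i, i < r → cc i ∈ T := by
    intro i h
    simp only [cc, dif_pos h]
    exact Finset.orderEmbOfFin_mem T hT ⟨i, h⟩
  have ccmono : ∀ i j, i < j → j < r → cc i < cc j := by
    intro i j hij hj
    simp only [cc, dif_pos hj, dif_pos (lt_trans hij hj)]
    exact (T.orderEmbOfFin hT).strictMono (by exact hij)
  refine ⟨fun i => cc (3*i), ?_, ?_, ?_⟩
  · intro i hi; exact ccmem _ (by omega)
  · intro i hi
    show cc (3*i) + 3 ≤ cc (3*(i+1))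
    have e : 3*(i+1) = 3*i + 3 := by ring
    rw [e]
    have h1 := ccmono (3*i) (3*i+1) (by omega) (by omega)
    have h2 := ccmono (3*i+1) (3*i+2) (by omega) (by omega)
    have h3 := ccmono (3*i+2) (3*i+3) (by omega) (by omega)
    omega
  · show cc (3*(k-1)) + 3 ≤ cc (3*0) + n
    have := hbound _ (ccmem (3*(k-1)) (by omega))
    have e : 3*0 = 0 := by ring
    rw [e]
    omega

lemma coreB (hk : 1 ≤ k) (hn : 3*k+1 ≤ n) (hr : r = 3*k - 2) (hT : T.card = r)
    (hvlt : ∀ x ∈ T, x + 2 ≤ n) (h0 : 0 ∈ T) (htop2 : n - 2 ∈ T) :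
    ∃ u : ℕ → ℕ, (∀ i, i < k → u i ∈ T) ∧ (∀ i, i + 2 ≤ k → u i + 3 ≤ u (i+1)) ∧
      u (k-1) + 3 ≤ u 0 + n := by
  have hr1 : 1 ≤ r := by omega
  let c := T.orderEmbOfFin hT
  let cc : ℕ → ℕ := fun i => if h : i < r then c ⟨i, h⟩ else 0
  have ccmem : ∀ i, i < r → cc i ∈ T := by
    intro i h
    simp only [cc, dif_pos h]
    exact Finset.orderEmbOfFin_mem T hT ⟨i, h⟩
  have ccmono : ∀ i j, i < j → j < r → cc i < cc j := by
    intro i j hij hj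
    simp only [cc, dif_pos hj, dif_pos (lt_trans hij hj)]
    exact (T.orderEmbOfFin hT).strictMono (by exact hij)
  have ccrep : ∀ x ∈ T, ∃ m : ℕ, m < r ∧ cc m = x := by
    intro x hx
    have : x ∈ Set.range c := by rw [Finset.range_orderEmbOfFin]; exact_mod_cast hx
    obtain ⟨m, hm⟩ := this
    exact ⟨m.1, m.2, by simp only [cc, dif_pos m.2, Fin.eta]; exact hm⟩
  -- endpoints
  have h00 : cc 0 = 0 := by
    obtain ⟨m, hm, hmx⟩ := ccrep 0 h0
    rcases Nat.eq_zero_or_pos m with h | h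
    · rw [h] at hmx; exact hmx
    · have := ccmono 0 m h hm; omega
  have hmaxv : cc (r-1) = n - 2 := by
    obtain ⟨m, hm, hmx⟩ := ccrep (n-2) htop2
    have h1 : cc (r-1) + 2 ≤ n := hvlt _ (ccmem _ (by omega))
    rcases Nat.lt_or_ge m (r-1) with h | h
    · have := ccmono m (r-1) h (by omega); omega
    · have : m = r - 1 := by omega
      rw [← this]; omega
  -- a two-gap exists
  have hw : ∃ w, w + 1 < r ∧ cc w + 2 ≤ cc (w + 1) := by
    by_contra hcon
    push_neg at hcon
    have key : ∀ j, j < r → cc j ≤ cc 0 + j := by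
      intro j
      induction j with
      | zero => intro _; omega
      | succ m ih =>
        intro h
        have h1 := ih (by omega)
        have h2 := hcon m (by omega)
        have h3 := ccmono m (m+1) (by omega) h
        omega
    have := key (r-1) (by omega)
    omega
  obtain ⟨w, hw1, hw2⟩ := hw
  have hk2 : 2 ≤ k := by omega
  have harith : ∃ a p q, a ≤ 1 ∧ p = a + 3*(q-1) ∧ 1 ≤ q ∧ q + 1 ≤ k ∧
      (w = p ∨ w = p + 1) ∧ p + 2 + 3*(k-1-q) = r - 2 + a ∧ p + 2 < r ∧ r - 2 + a < r := by
    have h3 : w % 3 = 0 ∨ w % 3 = 1 ∨ w % 3 = 2 := by omega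
    rcases h3 with h | h | h
    · exact ⟨0, w, w/3 + 1, by omega, by omega, by omega, by omega, by omega, by omega,
        by omega, by omega⟩
    · exact ⟨0, w-1, (w-1)/3 + 1, by omega, by omega, by omega, by omega, by omega, by omega,
        by omega, by omega⟩
    · exact ⟨1, w-1, (w-2)/3 + 1, by omega, by omega, by omega, by omega, by omega, by omega,
        by omega, by omega⟩
  obtain ⟨a, p, q, ha, hpq, hq1, hqk, hwp, htot, hp2, hra⟩ := harith
  have hjun : cc p + 3 ≤ cc (p+2) := by
    rcases hwp with h | h
    · subst h
      have := ccmono (w+1) (w+2) (by omega) (by omega)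
      omega
    · have h1 := ccmono p (p+1) (by omega) (by omega)
      subst h
      have e : p + 1 + 1 = p + 2 := rfl
      rw [e] at hw2
      omega
  refine ⟨fun i => if i < q then cc (a + 3*i) else cc (p + 2 + 3*(i - q)), ?_, ?_, ?_⟩
  · intro i hi
    by_cases h : i < q
    · simp only [if_pos h]
      exact ccmem _ (by omega)
    · simp only [if_neg h]
      exact ccmem _ (by omega)
  · intro i hi
    by_cases h1 : i + 1 < q
    · simp only [if_pos h1, if_pos (by omega : i < q)]
      have e : a + 3*(i+1) = (a+3*i) + 3 := by ring
      rw [e]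
      have g1 := ccmono (a+3*i) (a+3*i+1) (by omega) (by omega)
      have g2 := ccmono (a+3*i+1) (a+3*i+2) (by omega) (by omega)
      have g3 := ccmono (a+3*i+2) (a+3*i+3) (by omega) (by omega)
      omega
    · by_cases h2 : i + 1 = q
      · simp only [if_pos (by omega : i < q), if_neg (by omega : ¬ i + 1 < q)]
        have e1 : a + 3*i = p := by omega
        have e2 : i + 1 - q = 0 := by omega
        rw [e1, e2]
        simpa using hjun
      · simp only [if_neg (by omega : ¬ i < q), if_neg (by omega : ¬ i + 1 < q)]
        have e : p + 2 + 3*(i+1-q) = (p + 2 + 3*(i-q)) + 3 := by omega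
        rw [e]
        have g1 := ccmono (p+2+3*(i-q)) (p+2+3*(i-q)+1) (by omega) (by omega)
        have g2 := ccmono (p+2+3*(i-q)+1) (p+2+3*(i-q)+2) (by omega) (by omega)
        have g3 := ccmono (p+2+3*(i-q)+2) (p+2+3*(i-q)+3) (by omega) (by omega)
        omega
  · simp only [if_neg (by omega : ¬ k - 1 < q), if_pos (by omega : 0 < q)]
    have e1 : p + 2 + 3*(k-1-q) = r - 2 + a := htot
    rw [e1]
    have e2 : a + 3*0 = a := by ring
    rw [e2]
    rcases Nat.eq_zero_or_pos a with h | h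
    · subst h
      have e4 : r - 2 + 0 = r - 2 := rfl
      rw [e4]
      have := ccmono (r-2) (r-1) (by omega) (by omega)
      omega
    · have ha1 : a = 1 := by omega
      subst ha1
      have h1 := ccmono 0 1 (by omega) (by omega)
      have e3 : r - 2 + 1 = r - 1 := by omega
      rw [e3]
      omega

end Core

lemma indep_shift (n : ℕ) (S : Finset (ZMod n)) (t : ZMod n) (h : IsIndepSet n S) :
    IsIndepSet n (S.image (fun z => z + t)) := by
  intro x hx y hy hadj
  simp only [Finset.mem_image] at hx hy
  obtain ⟨a, ha, rfl⟩ := hx; obtain ⟨b, hb, rfl⟩ := hy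
  apply h a ha b hb
  obtain ⟨hne, hor⟩ := hadj
  constructor
  · intro e; exact hne (by rw [e])
  · rcases hor with h' | h' | h' | h'
    · left
      have e : b + t = (a + 1) + t := by rw [h']; ring
      exact add_right_cancel e
    · right; left
      have e : a + t = (b + 1) + t := by rw [h']; ring
      exact add_right_cancel e
    · right; right; left
      have e : b + t = (a + 2) + t := by rw [h']; ring
      exact add_right_cancel e
    · right; right; right
      have e : a + t = (b + 2) + t := by rw [h']; ring
      exact add_right_cancel e

lemma face_of_shifted (n k : ℕ) [NeZero n] (σ : Finset (ZMod n)) (C₀ : Finset (ZMod n))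
    (hC₀ : C₀ ⊆ Finset.univ \ σ) (t : ZMod n) (S : Finset (ZMod n))
    (hcard : S.card = k) (hind : IsIndepSet n S)
    (hsub : ∀ x ∈ S, x ∈ C₀.image (fun z => z + t)) : IsFace n k σ := by
  refine ⟨S.image (fun z => z + (-t)), ?_, ?_, indep_shift n S (-t) hind⟩
  · rw [Finset.disjoint_left]
    intro x hx
    simp only [Finset.mem_image] at hx
    obtain ⟨s, hs, rfl⟩ := hx
    have hs' := hsub s hs
    simp only [Finset.mem_image] at hs'
    obtain ⟨z, hz, rfl⟩ := hs'
    have e : z + t + (-t) = z := by ring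
    rw [e]
    have hz' := hC₀ hz
    simp only [Finset.mem_sdiff] at hz'
    exact hz'.2
  · rw [Finset.card_image_of_injective _ (add_left_injective _), hcard]

theorem stmt2 (n k : ℕ) (hk : 1 ≤ k) (hn : 3 * k + 1 ≤ n)
    (σ : Finset (ZMod n)) (hσ : σ.card ≤ n - 3 * k + 2) :
    IsFace n k σ := by
  haveI : NeZero n := ⟨by omega⟩
  have hcardn : Fintype.card (ZMod n) = n := ZMod.card n
  have hdiff : 3 * k - 2 ≤ (Finset.univ \ σ).card := by
    rw [Finset.card_sdiff_of_subset (Finset.subset_univ σ), Finset.card_univ, hcardn]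
    omega
  obtain ⟨C₀, hC₀sub, hC₀card⟩ := Finset.exists_subset_card_eq hdiff
  by_cases hA : ∃ y : ZMod n, y ∉ C₀ ∧ y + 1 ∉ C₀
  · -- Case A : two adjacent missing vertices
    obtain ⟨y, hy1, hy2⟩ := hA
    set t : ZMod n := -2 - y with ht
    set C₁ : Finset (ZMod n) := C₀.image (fun z => z + t) with hC₁
    have hm2 : (-2 : ZMod n) ∉ C₁ := by
      intro hmem
      simp only [hC₁, Finset.mem_image] at hmem
      obtain ⟨z, hz, hzt⟩ := hmem
      have : z = y := by
        have : z = -2 - t := by rw [← hzt]; ring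
        rw [this, ht]; ring
      exact hy1 (this ▸ hz)
    have hm1 : (-1 : ZMod n) ∉ C₁ := by
      intro hmem
      simp only [hC₁, Finset.mem_image] at hmem
      obtain ⟨z, hz, hzt⟩ := hmem
      have : z = y + 1 := by
        have : z = -1 - t := by rw [← hzt]; ring
        rw [this, ht]; ring
      exact hy2 (this ▸ hz)
    set T : Finset ℕ := C₁.image ZMod.val with hT
    have hTcard : T.card = 3 * k - 2 := by
      rw [hT, Finset.card_image_of_injective _ (ZMod.val_injective n), hC₁,
        Finset.card_image_of_injective _ (add_left_injective t), hC₀card]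
    have hTbound : ∀ x ∈ T, x + 3 ≤ n := by
      intro x hx
      simp only [hT, Finset.mem_image] at hx
      obtain ⟨z, hz, rfl⟩ := hx
      have hlt : z.val < n := ZMod.val_lt z
      have hne1 : z.val ≠ n - 1 := by
        intro he
        have e := ZMod.natCast_rightInverse (n := n) z
        have : z = -1 := by
          rw [← e, he, cast_sub_eq n 1 (by omega)]; norm_num
        exact hm1 (this ▸ hz)
      have hne2 : z.val ≠ n - 2 := by
        intro he
        have e := ZMod.natCast_rightInverse (n := n) z
        have : z = -2 := by
          rw [← e, he, cast_sub_eq n 2 (by omega)]; norm_num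
        exact hm2 (this ▸ hz)
      omega
    obtain ⟨u, hu1, hu2, hu3⟩ := coreA hk rfl hTcard hTbound
    have hmem : ∀ i, i < k → ((u i : ℕ) : ZMod n) ∈ C₁ := by
      intro i hi
      have := hu1 i hi
      simp only [hT, Finset.mem_image] at this
      obtain ⟨z, hz, hze⟩ := this
      rw [← hze, ZMod.natCast_rightInverse z]
      exact hz
    obtain ⟨S, hS1, hS2, hS3⟩ := exists_indep n k C₁ hn u hmem hu2 hu3
    exact face_of_shifted n k σ C₀ hC₀sub t S hS1 hS2 (by rw [← hC₁]; exact hS3)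
  · -- Case B : no two adjacent missing vertices
    have hy₀ : ∃ y : ZMod n, y ∉ C₀ := by
      by_contra h
      push_neg at h
      have hsub : Finset.univ ⊆ C₀ := fun z _ => h z
      have := Finset.card_le_card hsub
      rw [Finset.card_univ, hcardn, hC₀card] at this
      omega
    obtain ⟨y₀, hy₀⟩ := hy₀
    push_neg at hA
    set t : ZMod n := -1 - y₀ with ht
    set C₁ : Finset (ZMod n) := C₀.image (fun z => z + t) with hC₁
    have hm1 : (-1 : ZMod n) ∉ C₁ := by
      intro hmem
      simp only [hC₁, Finset.mem_image] at hmem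
      obtain ⟨z, hz, hzt⟩ := hmem
      have : z = y₀ := by
        have : z = -1 - t := by rw [← hzt]; ring
        rw [this, ht]; ring
      exact hy₀ (this ▸ hz)
    have hB1 : ∀ z : ZMod n, z ∈ C₁ ∨ z + 1 ∈ C₁ := by
      intro z
      by_cases h : (z - t) ∈ C₀
      · left
        simp only [hC₁, Finset.mem_image]
        exact ⟨z - t, h, by ring⟩
      · right
        have hmem := hA (z - t) h
        simp only [hC₁, Finset.mem_image]
        exact ⟨z - t + 1, hmem, by ring⟩
    have h0C : (0 : ZMod n) ∈ C₁ := by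
      rcases hB1 (-1) with h | h
      · exact absurd h hm1
      · rwa [neg_add_cancel] at h
    have hm2C : (-2 : ZMod n) ∈ C₁ := by
      rcases hB1 (-2) with h | h
      · exact h
      · exfalso
        apply hm1
        have e : (-2 : ZMod n) + 1 = -1 := by ring
        rwa [e] at h
    set T : Finset ℕ := C₁.image ZMod.val with hT
    have hTcard : T.card = 3 * k - 2 := by
      rw [hT, Finset.card_image_of_injective _ (ZMod.val_injective n), hC₁,
        Finset.card_image_of_injective _ (add_left_injective t), hC₀card]
    have hvlt : ∀ x ∈ T, x + 2 ≤ n := by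
      intro x hx
      simp only [hT, Finset.mem_image] at hx
      obtain ⟨z, hz, rfl⟩ := hx
      have hlt : z.val < n := ZMod.val_lt z
      have hne1 : z.val ≠ n - 1 := by
        intro he
        have e := ZMod.natCast_rightInverse (n := n) z
        have : z = -1 := by
          rw [← e, he, cast_sub_eq n 1 (by omega)]; norm_num
        exact hm1 (this ▸ hz)
      omega
    have h0T : (0 : ℕ) ∈ T := by
      simp only [hT, Finset.mem_image]
      exact ⟨0, h0C, ZMod.val_zero⟩
    have htop2 : n - 2 ∈ T := by
      simp only [hT, Finset.mem_image]
      refine ⟨-2, hm2C, ?_⟩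
      have e : (-2 : ZMod n) = ((n - 2 : ℕ) : ZMod n) := by
        rw [cast_sub_eq n 2 (by omega)]; norm_num
      rw [e, ZMod.val_cast_of_lt (by omega)]
    obtain ⟨u, hu1, hu2, hu3⟩ := coreB hk hn rfl hTcard hvlt h0T htop2
    have hmem : ∀ i, i < k → ((u i : ℕ) : ZMod n) ∈ C₁ := by
      intro i hi
      have := hu1 i hi
      simp only [hT, Finset.mem_image] at this
      obtain ⟨z, hz, hze⟩ := this
      rw [← hze, ZMod.natCast_rightInverse z]
      exact hz
    obtain ⟨S, hS1, hS2, hS3⟩ := exists_indep n k C₁ hn u hmem hu2 hu3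
    exact face_of_shifted n k σ C₀ hC₀sub t S hS1 hS2 (by rw [← hC₁]; exact hS3)
end

section
/- If n ≤ 3k - 1 and k ≥ 1, then the squared cycle graph W_n on ZMod n (with n ≥ 3, say) has no independent set of size k; hence the k-total cut complex Δ_k^t(W_n) is the void complex (has no faces). -/
theorem stmt5 (n k : ℕ) (hk : 1 ≤ k) (hn3 : 3 ≤ n) (hn : n ≤ 3 * k - 1) :
    (∀ S : Finset (ZMod n), S.card = k → ¬ IsIndepSet n S) ∧
      (∀ σ : Finset (ZMod n), ¬ IsFace n k σ) := by
  haveI : NeZero n := ⟨by omega⟩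
  have h1 : (1 : ZMod n) ≠ 0 := by
    have := (ZMod.natCast_eq_zero_iff 1 n).not.2
      (fun h => by have := Nat.le_of_dvd one_pos h; omega)
    simpa using this
  have h2 : (2 : ZMod n) ≠ 0 := by
    have := (ZMod.natCast_eq_zero_iff 2 n).not.2
      (fun h => by have := Nat.le_of_dvd two_pos h; omega)
    simpa using this
  have h12 : (1 : ZMod n) ≠ 2 := fun h => h1 (by linear_combination -h)
  have main : ∀ S : Finset (ZMod n), S.card = k → ¬ IsIndepSet n S := by
    intro S hcard hind
    set S1 := S.image (· + 1) with hS1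
    set S2 := S.image (· + 2) with hS2
    have c1 : S1.card = k := by
      rw [hS1, Finset.card_image_of_injective _ (add_left_injective 1), hcard]
    have c2 : S2.card = k := by
      rw [hS2, Finset.card_image_of_injective _ (add_left_injective 2), hcard]
    have d01 : Disjoint S S1 := by
      rw [Finset.disjoint_left]
      intro a haS ha1
      obtain ⟨b, hb, hba⟩ := Finset.mem_image.1 ha1
      refine hind b hb a haS ⟨?_, Or.inl hba.symm⟩
      rintro rfl
      exact h1 (by linear_combination hba)
    have d02 : Disjoint S S2 := by
      rw [Finset.disjoint_left]
      intro a haS ha2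
      obtain ⟨b, hb, hba⟩ := Finset.mem_image.1 ha2
      refine hind b hb a haS ⟨?_, Or.inr (Or.inr (Or.inl hba.symm))⟩
      rintro rfl
      exact h2 (by linear_combination hba)
    have d12 : Disjoint S1 S2 := by
      rw [Finset.disjoint_left]
      intro a ha1 ha2
      obtain ⟨b, hb, hba⟩ := Finset.mem_image.1 ha1
      obtain ⟨c, hc, hca⟩ := Finset.mem_image.1 ha2
      -- b + 1 = c + 2, so b = c + 1
      refine hind b hb c hc ⟨?_, Or.inr (Or.inl ?_)⟩
      · rintro rfl
        exact h12 (by linear_combination hba - hca)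
      · linear_combination hba - hca
    have hcardU : (S ∪ S1 ∪ S2).card = 3 * k := by
      rw [Finset.card_union_of_disjoint, Finset.card_union_of_disjoint d01,
        hcard, c1, c2]
      · ring
      · exact Finset.disjoint_union_left.2 ⟨d02, d12⟩
    have hle : (S ∪ S1 ∪ S2).card ≤ n := by
      have := Finset.card_le_univ (S ∪ S1 ∪ S2)
      simpa [ZMod.card n] using this
    omega
  refine ⟨main, ?_⟩
  rintro σ ⟨S, -, hcard, hind⟩
  exact main S hcard hind
end

section
/- Let W_n be the squared cycle on ZMod n with n ≥ 3k+1, and let S be an independent set of size k in W_n containing the vertex 1. Then S can be written as {i_0, i_1, ..., i_{k-1}} with i_0 = 1, i_j ≥ i_{j-1} + 3 for all 1 ≤ j ≤ k-1, and i_{k-1} ≤ n - 2 (as integers, using representatives in {1, ..., n}). -/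
theorem stmt9 (n k : ℕ) (hk : 1 ≤ k) (hn : 3 * k + 1 ≤ n)
    (S : Finset (ZMod n)) (hcard : S.card = k) (hindep : IsIndepSet n S)
    (h1 : (1 : ZMod n) ∈ S) :
    ∃ f : Fin k → ℕ,
      f ⟨0, hk⟩ = 1 ∧
      (∀ (j : ℕ) (hj : j + 1 < k), f ⟨j, by omega⟩ + 3 ≤ f ⟨j + 1, hj⟩) ∧
      (∀ j : Fin k, f j ≤ n - 2) ∧
      S = Finset.image (fun j => ((f j : ℕ) : ZMod n)) Finset.univ := by
  haveI : NeZero n := ⟨by omega⟩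
  have hn4 : 4 ≤ n := by omega
  haveI : Fact (1 < n) := ⟨by omega⟩
  have hval : ∀ a : ZMod n, ((a.val : ℕ) : ZMod n) = a := fun a => ZMod.natCast_rightInverse a
  -- the set of values
  set T : Finset ℕ := S.image ZMod.val with hT
  have hTcard : T.card = k := by
    rw [hT, Finset.card_image_of_injective _ (ZMod.val_injective n), hcard]
  have hv1 : ((1 : ZMod n)).val = 1 := ZMod.val_one n
  have h1T : (1 : ℕ) ∈ T := by
    rw [hT]; exact Finset.mem_image.2 ⟨1, h1, hv1⟩
  -- elements of T are ≥ 1 and ≤ n - 2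
  have hadj : ∀ a ∈ S, ∀ b ∈ S, a ≠ b → ¬(b = a + 1 ∨ a = b + 1 ∨ b = a + 2 ∨ a = b + 2) := by
    intro a ha b hb hne h
    exact hindep a ha b hb ⟨hne, h⟩
  have hge1 : ∀ t ∈ T, 1 ≤ t := by
    intro t ht
    rcases Finset.mem_image.1 ht with ⟨a, ha, rfl⟩
    by_contra hlt
    have h0 : a = 0 := (ZMod.val_eq_zero a).1 (by omega)
    exact hadj a ha 1 h1 (by rw [h0]; exact fun h => one_ne_zero h.symm)
      (by rw [h0]; left; rw [zero_add])
  have hle : ∀ t ∈ T, t ≤ n - 2 := by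
    intro t ht
    rcases Finset.mem_image.1 ht with ⟨a, ha, rfl⟩
    have hlt := ZMod.val_lt a
    by_contra hgt
    have h2 : a.val = n - 1 := by omega
    have haval : a = ((n - 1 : ℕ) : ZMod n) := by rw [← h2, hval]
    have hane : a ≠ 1 := by
      intro h; rw [h, hv1] at h2; omega
    refine hadj a ha 1 h1 hane ?_
    right; right; left
    rw [haval]
    have : ((n : ℕ) : ZMod n) = 0 := ZMod.natCast_self n
    have hn1 : (n - 1 : ℕ) + 3 = n + 2 := by omega
    have := congrArg (fun m : ℕ => ((m : ℕ) : ZMod n)) hn1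
    push_cast at this ⊢
    rw [ZMod.natCast_self] at this
    linear_combination -this
  -- gap of 3
  have hgap : ∀ s ∈ T, ∀ t ∈ T, s < t → s + 3 ≤ t := by
    intro s hs t ht hst
    rcases Finset.mem_image.1 hs with ⟨a, ha, rfl⟩
    rcases Finset.mem_image.1 ht with ⟨b, hb, rfl⟩
    by_contra hlt
    have hne : a ≠ b := by intro h; rw [h] at hst; omega
    refine hadj a ha b hb hne ?_
    have hb1 : b.val = a.val + 1 ∨ b.val = a.val + 2 := by omega
    rcases hb1 with h | h
    · left
      have := congrArg (fun m : ℕ => ((m : ℕ) : ZMod n)) h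
      simp only [hval] at this
      push_cast at this
      rw [hval] at this
      exact this
    · right; right; left
      have := congrArg (fun m : ℕ => ((m : ℕ) : ZMod n)) h
      push_cast at this
      rw [hval, hval] at this
      exact this
  -- order iso
  let e := T.orderIsoOfFin hTcard
  refine ⟨fun j => (e j : ℕ), ?_, ?_, ?_, ?_⟩
  · -- f 0 = 1
    have hmem : ((e ⟨0, hk⟩ : ℕ)) ∈ T := (e ⟨0, hk⟩).2
    have h1le : 1 ≤ (e ⟨0, hk⟩ : ℕ) := hge1 _ hmem
    rcases (e.surjective ⟨1, h1T⟩) with ⟨j0, hj0⟩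
    have h2 : (e ⟨0, hk⟩ : ℕ) ≤ 1 := by
      have hle' : (⟨0, hk⟩ : Fin k) ≤ j0 := Fin.mk_le_of_le_val (Nat.zero_le _)
      have h3 := (e.le_iff_le).2 hle'
      rw [hj0] at h3
      exact_mod_cast h3
    show (e ⟨0, hk⟩ : ℕ) = 1
    omega
  · intro j hj
    have hlt : (e ⟨j, by omega⟩ : ℕ) < (e ⟨j + 1, hj⟩ : ℕ) := by
      have : (⟨j, by omega⟩ : Fin k) < ⟨j + 1, hj⟩ := by
        simp [Fin.lt_def]
      exact_mod_cast (e.lt_iff_lt).2 this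
    exact hgap _ (e _).2 _ (e _).2 hlt
  · intro j; exact hle _ (e j).2
  · apply Finset.eq_of_subset_of_card_le
    · intro a ha
      have : a.val ∈ T := Finset.mem_image.2 ⟨a, ha, rfl⟩
      rcases e.surjective ⟨a.val, this⟩ with ⟨j, hj⟩
      refine Finset.mem_image.2 ⟨j, Finset.mem_univ j, ?_⟩
      show (((e j : ℕ)) : ZMod n) = a
      rw [hj]
      exact hval a
    · calc (Finset.image (fun j => (((e j : ℕ) : ℕ) : ZMod n)) Finset.univ).card
          ≤ (Finset.univ : Finset (Fin k)).card := Finset.card_image_le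
        _ = k := by simp
        _ = S.card := hcard.symm
end

section
/- For k ≥ 2, the facets of Δ_k^t(W_{3k}) are exactly the three sets [ZMod 3k] \ {j, j+3, ..., j+3(k-1)} for j = 0, 1, 2, and their common intersection is empty when k ≥ 1 (each vertex lies in exactly two of the three facets). -/
/-- The residue class `{j, j+3, ..., j+3(k-1)}` in `ZMod (3*k)`. -/
def resClass (k j : ℕ) : Finset (ZMod (3 * k)) :=
  Finset.image (fun i : Fin k => ((3 * (i : ℕ) + j : ℕ) : ZMod (3 * k))) Finset.univ

section aux
variable {k : ℕ} (hk : 2 ≤ k)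

lemma neZero3k (hk : 2 ≤ k) : NeZero (3 * k) := ⟨by omega⟩

-- casting a val back
lemma cast_val' (hk : 2 ≤ k) (a : ZMod (3*k)) : ((a.val : ℕ) : ZMod (3*k)) = a := by
  haveI := neZero3k hk
  exact (ZMod.natCast_val a).trans (ZMod.cast_id _ a)

lemma val_lt' (hk : 2 ≤ k) (a : ZMod (3*k)) : a.val < 3*k := by
  haveI := neZero3k hk
  exact ZMod.val_lt a

-- Adjacency from val relation: b.val = a.val + d (d ∈ {1,2})
lemma adj_of_cast (hk : 2 ≤ k) (a b : ZMod (3*k)) (d : ℕ) (hd : d = 1 ∨ d = 2)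
    (h : b = a + (d : ZMod (3*k))) : (squaredCycle (3*k)).Adj a b := by
  have hne : a ≠ b := by
    rintro rfl
    have : ((d:ℕ) : ZMod (3*k)) = ((0:ℕ) : ZMod (3*k)) := by
      have := h.symm; push_cast at this ⊢; linear_combination this
    rw [ZMod.natCast_eq_natCast_iff] at this
    have := (Nat.modEq_zero_iff_dvd).mp this
    have := Nat.le_of_dvd (by omega) this
    omega
  refine ⟨hne, ?_⟩
  rcases hd with rfl | rfl
  · left; exact_mod_cast h
  · right; right; left; exact_mod_cast h

lemma key1 (hk : 2 ≤ k) {S : Finset (ZMod (3*k))} (hind : IsIndepSet (3*k) S)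
    {a b : ZMod (3*k)} (ha : a ∈ S) (hb : b ∈ S)
    (h1 : a.val < b.val) (h2 : b.val ≤ a.val + 2) : False := by
  set d := b.val - a.val with hd
  have hbe : b = a + (d : ZMod (3*k)) := by
    have : b = ((b.val : ℕ) : ZMod (3*k)) := (cast_val' hk b).symm
    rw [this]
    have : b.val = a.val + d := by omega
    rw [this]
    push_cast
    rw [cast_val' hk a]
  exact hind a ha b hb (adj_of_cast hk a b d (by omega) hbe)

lemma key2 (hk : 2 ≤ k) {S : Finset (ZMod (3*k))} (hind : IsIndepSet (3*k) S)
    {a b : ZMod (3*k)} (ha : a ∈ S) (hb : b ∈ S) (d : ℕ) (hd : d = 1 ∨ d = 2)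
    (h : b.val + d = a.val + 3*k) : False := by
  have hbe : a = b + (d : ZMod (3*k)) := by
    have h1 : a = ((a.val : ℕ) : ZMod (3*k)) := (cast_val' hk a).symm
    rw [h1]
    have h2 : ((a.val : ℕ) : ZMod (3*k)) = ((a.val + 3*k : ℕ) : ZMod (3*k)) := by
      rw [Nat.cast_add, ZMod.natCast_self, add_zero]
    rw [h2, ← h]
    push_cast
    rw [cast_val' hk b]
  exact hind b hb a ha (adj_of_cast hk b a d hd hbe)

end aux

section classify
variable {k : ℕ}

-- injectivity of bucket map on independent set
lemma bucket_injOn (hk : 2 ≤ k) {S : Finset (ZMod (3*k))} (hind : IsIndepSet (3*k) S)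
    {a b : ZMod (3*k)} (ha : a ∈ S) (hb : b ∈ S) (h : a.val / 3 = b.val / 3) : a = b := by
  by_contra hne
  have hv : a.val ≠ b.val := fun hv => hne (by
    rw [← cast_val' hk a, ← cast_val' hk b, hv])
  rcases Nat.lt_or_ge a.val b.val with h1 | h1
  · exact key1 hk hind ha hb h1 (by omega)
  · exact key1 hk hind hb ha (by omega) (by omega)

-- surjectivity: every bucket m < k is hit
lemma bucket_surj (hk : 2 ≤ k) {S : Finset (ZMod (3*k))} (hcard : S.card = k)
    (hind : IsIndepSet (3*k) S) (m : ℕ) (hm : m < k) : ∃ a ∈ S, a.val / 3 = m := by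
  have himg : (S.image (fun a => a.val / 3)) = Finset.range k := by
    apply Finset.eq_of_subset_of_card_le
    · intro x hx
      simp only [Finset.mem_image] at hx
      obtain ⟨a, ha, rfl⟩ := hx
      have := val_lt' hk a
      simp only [Finset.mem_range]
      omega
    · rw [Finset.card_range, Finset.card_image_of_injOn, hcard]
      intro a ha b hb h
      exact bucket_injOn hk hind ha hb h
  have : m ∈ S.image (fun a => a.val / 3) := by rw [himg]; simp [hm]
  simpa using this

-- step: consecutive buckets, residues nondecreasing
lemma step_mono (hk : 2 ≤ k) {S : Finset (ZMod (3*k))} (hind : IsIndepSet (3*k) S)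
    {a b : ZMod (3*k)} (ha : a ∈ S) (hb : b ∈ S) (h : b.val / 3 = a.val / 3 + 1) :
    a.val % 3 ≤ b.val % 3 := by
  by_contra hlt
  push_neg at hlt
  have h1 : a.val < b.val := by omega
  exact key1 hk hind ha hb h1 (by omega)

-- iterated monotonicity
lemma chain_mono (hk : 2 ≤ k) {S : Finset (ZMod (3*k))} (hcard : S.card = k)
    (hind : IsIndepSet (3*k) S) :
    ∀ i : ℕ, ∀ a ∈ S, ∀ b ∈ S, a.val / 3 + i = b.val / 3 → a.val % 3 ≤ b.val % 3 := by
  intro i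
  induction i with
  | zero =>
    intro a ha b hb h
    rw [bucket_injOn hk hind ha hb (by omega)]
  | succ n ih =>
    intro a ha b hb h
    have hbk : b.val / 3 < k := by have := val_lt' hk b; omega
    obtain ⟨c, hc, hcb⟩ := bucket_surj hk hcard hind (a.val / 3 + n) (by omega)
    calc a.val % 3 ≤ c.val % 3 := ih a ha c hc hcb.symm
      _ ≤ b.val % 3 := step_mono hk hind hc hb (by omega)

-- wrap-around
lemma wrap_mono (hk : 2 ≤ k) {S : Finset (ZMod (3*k))} (hind : IsIndepSet (3*k) S)
    {a b : ZMod (3*k)} (ha : a ∈ S) (hb : b ∈ S) (h0 : a.val / 3 = 0)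
    (h1 : b.val / 3 = k - 1) : b.val % 3 ≤ a.val % 3 := by
  by_contra hlt
  push_neg at hlt
  have hav := val_lt' hk a
  have hbv := val_lt' hk b
  -- a.val = a.val%3 < b.val%3, b.val = 3(k-1) + b.val%3
  -- a = b + d where d = a.val%3 + 3 - b.val%3 ∈ {1,2}
  exact key2 hk hind ha hb (a.val % 3 + 3 - b.val % 3) (by omega) (by omega)

-- all residues equal
lemma residue_const (hk : 2 ≤ k) {S : Finset (ZMod (3*k))} (hcard : S.card = k)
    (hind : IsIndepSet (3*k) S) {a b : ZMod (3*k)} (ha : a ∈ S) (hb : b ∈ S) :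
    a.val % 3 = b.val % 3 := by
  obtain ⟨z, hz, hz0⟩ := bucket_surj hk hcard hind 0 (by omega)
  obtain ⟨w, hw, hw1⟩ := bucket_surj hk hcard hind (k-1) (by omega)
  have hav := val_lt' hk a
  have hbv := val_lt' hk b
  have h1 : z.val % 3 ≤ a.val % 3 := chain_mono hk hcard hind (a.val/3) z hz a ha (by omega)
  have h2 : a.val % 3 ≤ w.val % 3 := chain_mono hk hcard hind (k - 1 - a.val/3) a ha w hw (by omega)
  have h3 : z.val % 3 ≤ b.val % 3 := chain_mono hk hcard hind (b.val/3) z hz b hb (by omega)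
  have h4 : b.val % 3 ≤ w.val % 3 := chain_mono hk hcard hind (k - 1 - b.val/3) b hb w hw (by omega)
  have h5 : w.val % 3 ≤ z.val % 3 := wrap_mono hk hind hz hw hz0 hw1
  omega

end classify

section res
variable {k : ℕ}

lemma mem_resClass (hk : 2 ≤ k) (j : ℕ) (hj : j < 3) (a : ZMod (3*k)) :
    a ∈ resClass k j ↔ a.val % 3 = j := by
  constructor
  · intro h
    simp only [resClass, Finset.mem_image, Finset.mem_univ, true_and] at h
    obtain ⟨i, rfl⟩ := h
    have hi : (i : ℕ) < k := i.2
    rw [ZMod.val_cast_of_lt (by omega)]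
    omega
  · intro h
    have hav := val_lt' hk a
    simp only [resClass, Finset.mem_image, Finset.mem_univ, true_and]
    refine ⟨⟨a.val / 3, by omega⟩, ?_⟩
    have : 3 * (a.val / 3) + j = a.val := by omega
    rw [this, cast_val' hk a]

lemma card_resClass (hk : 2 ≤ k) (j : ℕ) (hj : j < 3) : (resClass k j).card = k := by
  rw [resClass, Finset.card_image_of_injective _ ?_, Finset.card_univ, Fintype.card_fin]
  intro i i' h
  have h2 := congrArg ZMod.val h
  rw [ZMod.val_cast_of_lt (by have := i.2; omega), ZMod.val_cast_of_lt (by have := i'.2; omega)] at h2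
  exact Fin.ext (by omega)

lemma modeq_small {n x y : ℕ} (hn : 0 < n) (hx : x < n) (hy : y < 2*n)
    (h : x ≡ y [MOD n]) : x = y ∨ x + n = y := by
  unfold Nat.ModEq at h
  rw [Nat.mod_eq_of_lt hx] at h
  rcases Nat.lt_or_ge y n with h1 | h1
  · rw [Nat.mod_eq_of_lt h1] at h; omega
  · rw [Nat.mod_eq_sub_mod h1, Nat.mod_eq_of_lt (by omega)] at h; omega

lemma indep_resClass (hk : 2 ≤ k) (j : ℕ) (hj : j < 3) :
    IsIndepSet (3*k) (resClass k j) := by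
  intro a ha b hb hadj
  rw [mem_resClass hk j hj] at ha hb
  have hav := val_lt' hk a
  have hbv := val_lt' hk b
  obtain ⟨hne, h⟩ := hadj
  have hvne : a.val ≠ b.val := fun hv => hne (by
    rw [← cast_val' hk a, ← cast_val' hk b, hv])
  have key : ∀ x y : ZMod (3*k), x.val % 3 = j → y.val % 3 = j → x.val < 3*k →
      y.val < 3*k → ∀ d : ℕ, d = 1 ∨ d = 2 → y = x + (d : ZMod (3*k)) → False := by
    intro x y hx hy hxv hyv d hd heq
    have : ((y.val : ℕ) : ZMod (3*k)) = ((x.val + d : ℕ) : ZMod (3*k)) := by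
      rw [cast_val' hk y, heq, Nat.cast_add, cast_val' hk x]
    rw [ZMod.natCast_eq_natCast_iff] at this
    rcases modeq_small (by omega) hyv (by omega) this with h' | h' <;> omega
  rcases h with h | h | h | h
  · exact key a b ha hb hav hbv 1 (by omega) (by exact_mod_cast h)
  · exact key b a hb ha hbv hav 1 (by omega) (by exact_mod_cast h)
  · exact key a b ha hb hav hbv 2 (by omega) (by exact_mod_cast h)
  · exact key b a hb ha hbv hav 2 (by omega) (by exact_mod_cast h)

lemma indep_eq_resClass (hk : 2 ≤ k) {S : Finset (ZMod (3*k))} (hcard : S.card = k)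
    (hind : IsIndepSet (3*k) S) : ∃ j < 3, S = resClass k j := by
  have hne : S.Nonempty := by rw [← Finset.card_pos, hcard]; omega
  obtain ⟨a0, ha0⟩ := hne
  refine ⟨a0.val % 3, by omega, ?_⟩
  apply Finset.ext
  intro a
  rw [mem_resClass hk _ (by omega)]
  constructor
  · intro ha
    exact (residue_const hk hcard hind ha ha0)
  · intro h
    have hav := val_lt' hk a
    obtain ⟨b, hb, hbk⟩ := bucket_surj hk hcard hind (a.val / 3) (by omega)
    have : b.val % 3 = a0.val % 3 := residue_const hk hcard hind hb ha0
    have hv : b.val = a.val := by omega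
    rwa [← cast_val' hk a, ← hv, cast_val' hk b]
end res

section main
variable {k : ℕ} [NeZero (3*k)]

lemma face_compl (hk : 2 ≤ k) (j : ℕ) (hj : j < 3) :
    IsFace (3*k) k ((resClass k j)ᶜ) :=
  ⟨resClass k j, disjoint_compl_right, card_resClass hk j hj, indep_resClass hk j hj⟩

lemma resClass_subset_eq (hk : 2 ≤ k) (j j' : ℕ) (hj : j < 3) (hj' : j' < 3)
    (h : resClass k j' ⊆ resClass k j) : j = j' := by
  have hne : (resClass k j').Nonempty := by
    rw [← Finset.card_pos, card_resClass hk j' hj']; omega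
  obtain ⟨a, ha⟩ := hne
  have h1 := (mem_resClass hk j' hj' a).mp ha
  have h2 := (mem_resClass hk j hj a).mp (h ha)
  omega

lemma compl_maximal (hk : 2 ≤ k) (j : ℕ) (hj : j < 3) (τ : Finset (ZMod (3*k)))
    (hτ : IsFace (3*k) k τ) (hsub : (resClass k j)ᶜ ⊆ τ) : τ = (resClass k j)ᶜ := by
  obtain ⟨S, hdisj, hcard, hind⟩ := hτ
  obtain ⟨j', hj', rfl⟩ := indep_eq_resClass hk hcard hind
  have hτsub : τ ⊆ (resClass k j')ᶜ := by
    intro x hx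
    rw [Finset.mem_compl]
    exact fun hxS => (Finset.disjoint_left.mp hdisj hxS) hx
  have : (resClass k j)ᶜ ⊆ (resClass k j')ᶜ := hsub.trans hτsub
  have heq : j = j' := resClass_subset_eq hk j j' hj hj' (by
    intro x hx
    by_contra hxn
    exact Finset.mem_compl.mp (this (Finset.mem_compl.mpr hxn)) hx)
  subst heq
  exact Finset.Subset.antisymm hτsub hsub

theorem stmt13 (k : ℕ) (hk : 2 ≤ k) :
    (∀ σ : Finset (ZMod (3 * k)),
        (IsFace (3 * k) k σ ∧
            ∀ τ : Finset (ZMod (3 * k)), IsFace (3 * k) k τ → σ ⊆ τ → τ = σ) ↔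
          ((∀ a, a ∈ σ ↔ a ∉ resClass k 0) ∨ (∀ a, a ∈ σ ↔ a ∉ resClass k 1) ∨
            (∀ a, a ∈ σ ↔ a ∉ resClass k 2))) ∧
    (∀ a : ZMod (3 * k), a ∈ resClass k 0 ∨ a ∈ resClass k 1 ∨ a ∈ resClass k 2) := by
  haveI : NeZero (3 * k) := ⟨by omega⟩
  constructor
  · intro σ
    constructor
    · rintro ⟨⟨S, hdisj, hcard, hind⟩, hmax⟩
      obtain ⟨j, hj, rfl⟩ := indep_eq_resClass hk hcard hind
      have hsub : σ ⊆ (resClass k j)ᶜ := by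
        intro x hx
        rw [Finset.mem_compl]
        exact fun hxS => (Finset.disjoint_left.mp hdisj hxS) hx
      have heq : (resClass k j)ᶜ = σ := hmax _ (face_compl hk j hj) hsub
      have hchar : ∀ a, a ∈ σ ↔ a ∉ resClass k j := by
        intro a; rw [← heq, Finset.mem_compl]
      interval_cases j
      · exact Or.inl hchar
      · exact Or.inr (Or.inl hchar)
      · exact Or.inr (Or.inr hchar)
    · intro h
      have : ∃ j < 3, ∀ a, a ∈ σ ↔ a ∉ resClass k j := by
        rcases h with h | h | h
        exacts [⟨0, by omega, h⟩, ⟨1, by omega, h⟩, ⟨2, by omega, h⟩]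
      obtain ⟨j, hj, hchar⟩ := this
      have hσ : σ = (resClass k j)ᶜ := by
        apply Finset.ext; intro a; rw [Finset.mem_compl]; exact hchar a
      subst hσ
      exact ⟨face_compl hk j hj, fun τ hτ hsub => compl_maximal hk j hj τ hτ hsub⟩
  · intro a
    have h := Nat.mod_lt a.val (show 0 < 3 by omega)
    rcases (by omega : a.val % 3 = 0 ∨ a.val % 3 = 1 ∨ a.val % 3 = 2) with h0 | h0 | h0
    · exact Or.inl ((mem_resClass hk 0 (by omega) a).mpr h0)
    · exact Or.inr (Or.inl ((mem_resClass hk 1 (by omega) a).mpr h0))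
    · exact Or.inr (Or.inr ((mem_resClass hk 2 (by omega) a).mpr h0))
end main
end

section
/- Let σ be a face of Δ_3^t(W_n) (n ≥ 11) that is unmatched under the element matching with vertex 1. Then n - 3 ≥ |σ| ≥ n - 7; equivalently, the complement [n] \ σ has cardinality between 3 and 7 and contains the vertex 1. -/
-- helper: non-adjacency and ne for shifted points
lemma nonadj' (n : ℕ) (hn : 11 ≤ n) (d : ℕ) (h3 : 3 ≤ d) (hdn : d + 3 ≤ n) (x : ZMod n) :
    x ≠ x + (d : ZMod n) ∧ ¬ (squaredCycle n).Adj x (x + (d : ZMod n)) := by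
  haveI : NeZero n := ⟨by omega⟩
  have hdlt : d < n := by omega
  have hval : ((d : ZMod n)).val = d := ZMod.val_cast_of_lt hdlt
  constructor
  · intro h
    have h0 : (d : ZMod n) = 0 := by
      have := (add_eq_left (a := x) (b := (d : ZMod n))).mp h.symm
      exact this
    have := (ZMod.natCast_eq_zero_iff d n).mp h0
    have := Nat.le_of_dvd (by omega) this
    omega
  · rintro ⟨hne, h | h | h | h⟩
    · -- x + d = x + 1
      have h1 : (d : ZMod n) = ((1 : ℕ) : ZMod n) := by
        have := add_left_cancel (a := x) (b := (d : ZMod n)) (c := 1) h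
        simpa using this
      have : d = 1 := by
        have := congrArg ZMod.val h1
        rwa [hval, ZMod.val_cast_of_lt (by omega : 1 < n)] at this
      omega
    · -- x = (x + d) + 1
      have h1 : x + ((d + 1 : ℕ) : ZMod n) = x := by push_cast; rw [← add_assoc]; exact h.symm
      have h0 : ((d + 1 : ℕ) : ZMod n) = 0 := (add_eq_left).mp h1
      have := Nat.le_of_dvd (by omega) ((ZMod.natCast_eq_zero_iff _ n).mp h0)
      omega
    · -- x + d = x + 2
      have h1 : (d : ZMod n) = ((2 : ℕ) : ZMod n) := by
        have := add_left_cancel (a := x) (b := (d : ZMod n)) (c := 2) h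
        simpa using this
      have : d = 2 := by
        have := congrArg ZMod.val h1
        rwa [hval, ZMod.val_cast_of_lt (by omega : 2 < n)] at this
      omega
    · -- x = (x + d) + 2
      have h1 : x + ((d + 2 : ℕ) : ZMod n) = x := by push_cast; rw [← add_assoc]; exact h.symm
      have h0 : ((d + 2 : ℕ) : ZMod n) = 0 := (add_eq_left).mp h1
      have := Nat.le_of_dvd (by omega) ((ZMod.natCast_eq_zero_iff _ n).mp h0)
      omega

lemma nat_spread (V : Finset ℕ) (hV : 7 ≤ V.card) :
    ∃ a ∈ V, ∃ b ∈ V, ∃ c ∈ V, a + 3 ≤ b ∧ b + 3 ≤ c := by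
  have hne : V.Nonempty := Finset.card_pos.mp (by omega)
  set a := V.min' hne with ha
  have haV : a ∈ V := V.min'_mem hne
  have hamin : ∀ v ∈ V, a ≤ v := fun v hv => V.min'_le v hv
  have hWne : (V.filter (fun v => a + 3 ≤ v)).Nonempty := by
    by_contra h
    have hsub : V ⊆ Finset.Icc a (a + 2) := by
      intro v hv
      have h1 := hamin v hv
      have h2 : ¬ (a + 3 ≤ v) := fun hc => h ⟨v, Finset.mem_filter.mpr ⟨hv, hc⟩⟩
      simp only [Finset.mem_Icc]; omega
    have := Finset.card_le_card hsub
    rw [Nat.card_Icc] at this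
    omega
  set W := V.filter (fun v => a + 3 ≤ v) with hW
  set b := W.min' hWne with hb
  have hbW : b ∈ W := W.min'_mem hWne
  have hbV : b ∈ V := (Finset.mem_filter.mp hbW).1
  have hab : a + 3 ≤ b := (Finset.mem_filter.mp hbW).2
  have hXne : (V.filter (fun v => b + 3 ≤ v)).Nonempty := by
    by_contra h
    have hsub : V ⊆ Finset.Icc a (a + 2) ∪ Finset.Icc b (b + 2) := by
      intro v hv
      have h1 := hamin v hv
      have h4 : ¬ (b + 3 ≤ v) := fun hc => h ⟨v, Finset.mem_filter.mpr ⟨hv, hc⟩⟩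
      by_cases h2 : a + 3 ≤ v
      · have hvW : v ∈ W := Finset.mem_filter.mpr ⟨hv, h2⟩
        have h3 := W.min'_le v hvW
        simp only [Finset.mem_union, Finset.mem_Icc]; omega
      · simp only [Finset.mem_union, Finset.mem_Icc]; omega
    have h5 := Finset.card_le_card hsub
    have h6 := Finset.card_union_le (Finset.Icc a (a + 2)) (Finset.Icc b (b + 2))
    rw [Nat.card_Icc, Nat.card_Icc] at h6
    omega
  obtain ⟨c, hc⟩ := hXne
  exact ⟨a, haV, b, hbV, c, (Finset.mem_filter.mp hc).1, hab, (Finset.mem_filter.mp hc).2⟩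

lemma exists_indep_s18 (n : ℕ) (hn : 11 ≤ n) (T : Finset (ZMod n)) (hT : 7 ≤ T.card) :
    ∃ S : Finset (ZMod n), S ⊆ T ∧ S.card = 3 ∧ IsIndepSet n S := by
  haveI : NeZero n := ⟨by omega⟩
  by_cases hd : ∀ x : ZMod n, x ∈ T ∨ x + 1 ∈ T
  · -- dense case
    have hTne : T.Nonempty := Finset.card_pos.mp (by omega)
    obtain ⟨t1, ht1⟩ := hTne
    obtain ⟨d1, hd1, ht2⟩ : ∃ d1 : ℕ, (d1 = 3 ∨ d1 = 4) ∧ t1 + (d1 : ZMod n) ∈ T := by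
      rcases hd (t1 + ((3 : ℕ) : ZMod n)) with h | h
      · exact ⟨3, Or.inl rfl, h⟩
      · refine ⟨4, Or.inr rfl, ?_⟩
        have he : t1 + ((4 : ℕ) : ZMod n) = t1 + ((3 : ℕ) : ZMod n) + 1 := by push_cast; ring
        rw [he]; exact h
    set t2 := t1 + (d1 : ZMod n) with ht2def
    obtain ⟨d2, hd2, ht3⟩ : ∃ d2 : ℕ, (d2 = 3 ∨ d2 = 4) ∧ t2 + (d2 : ZMod n) ∈ T := by
      rcases hd (t2 + ((3 : ℕ) : ZMod n)) with h | h
      · exact ⟨3, Or.inl rfl, h⟩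
      · refine ⟨4, Or.inr rfl, ?_⟩
        have he : t2 + ((4 : ℕ) : ZMod n) = t2 + ((3 : ℕ) : ZMod n) + 1 := by push_cast; ring
        rw [he]; exact h
    set t3 := t2 + (d2 : ZMod n) with ht3def
    have key : t3 = t1 + ((d1 + d2 : ℕ) : ZMod n) := by
      rw [ht3def, ht2def]; push_cast; ring
    have h12 := nonadj' n hn d1 (by omega) (by omega) t1
    have h23 := nonadj' n hn d2 (by omega) (by omega) t2
    have h13 := nonadj' n hn (d1 + d2) (by omega) (by omega) t1
    rw [← key] at h13
    refine ⟨{t1, t2, t3}, ?_, ?_, ?_⟩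
    · intro z hz
      simp only [Finset.mem_insert, Finset.mem_singleton] at hz
      rcases hz with rfl | rfl | rfl <;> assumption
    · rw [Finset.card_insert_of_notMem, Finset.card_insert_of_notMem,
        Finset.card_singleton]
      · simp only [Finset.mem_singleton]; exact h23.1
      · simp only [Finset.mem_insert, Finset.mem_singleton]
        push_neg
        exact ⟨h12.1, h13.1⟩
    · intro a ha b hb
      simp only [Finset.mem_insert, Finset.mem_singleton] at ha hb
      rcases ha with rfl | rfl | rfl <;> rcases hb with rfl | rfl | rfl
      · exact (squaredCycle n).loopless.irrefl _
      · exact h12.2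
      · exact h13.2
      · exact fun h => h12.2 h.symm
      · exact (squaredCycle n).loopless.irrefl _
      · exact h23.2
      · exact fun h => h13.2 h.symm
      · exact fun h => h23.2 h.symm
      · exact (squaredCycle n).loopless.irrefl _
  · -- sparse case: there is a hole of size 2
    push_neg at hd
    obtain ⟨x, hx1, hx2⟩ := hd
    set c := x + 2 with hc
    set f : ZMod n → ℕ := fun t => (t - c).val with hf
    have hfinj : Function.Injective f := by
      intro u v huv
      have := ZMod.val_injective n huv
      exact sub_left_injective this
    have hbound : ∀ t ∈ T, f t ≤ n - 3 := by
      intro t ht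
      have hlt : (t - c).val < n := ZMod.val_lt _
      have hne1 : f t ≠ n - 1 := by
        intro h
        simp only [hf] at h
        have : t - c = ((n - 1 : ℕ) : ZMod n) := by
          rw [← ZMod.natCast_zmod_val (t - c), h]
        have hval : t = c + ((n - 1 : ℕ) : ZMod n) := by
          rw [← this]; ring
        have hcast : ((n - 1 : ℕ) : ZMod n) = -1 := by
          have : ((n - 1 : ℕ) : ZMod n) = (n : ZMod n) - 1 := by
            have h1 : (1 : ℕ) ≤ n := by omega
            push_cast [Nat.cast_sub h1]; ring
          rw [this, ZMod.natCast_self]; ring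
        rw [hcast, hc] at hval
        have : t = x + 1 := by rw [hval]; ring
        rw [this] at ht; exact hx2 ht
      have hne2 : f t ≠ n - 2 := by
        intro h
        simp only [hf] at h
        have : t - c = ((n - 2 : ℕ) : ZMod n) := by
          rw [← ZMod.natCast_zmod_val (t - c), h]
        have hval : t = c + ((n - 2 : ℕ) : ZMod n) := by
          rw [← this]; ring
        have hcast : ((n - 2 : ℕ) : ZMod n) = -2 := by
          have : ((n - 2 : ℕ) : ZMod n) = (n : ZMod n) - 2 := by
            have h1 : (2 : ℕ) ≤ n := by omega
            push_cast [Nat.cast_sub h1]; ring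
          rw [this, ZMod.natCast_self]; ring
        rw [hcast, hc] at hval
        have : t = x := by rw [hval]; ring
        rw [this] at ht; exact hx1 ht
      simp only [hf] at hne1 hne2 ⊢
      omega
    have hVcard : 7 ≤ (T.image f).card := by
      rw [Finset.card_image_of_injective T hfinj]; exact hT
    obtain ⟨va, hva, vb, hvb, vc, hvc, hab, hbc⟩ := nat_spread (T.image f) hVcard
    obtain ⟨ta, hta, hfa⟩ := Finset.mem_image.mp hva
    obtain ⟨tb, htb, hfb⟩ := Finset.mem_image.mp hvb
    obtain ⟨tc, htc, hfc⟩ := Finset.mem_image.mp hvc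
    -- reconstruct: t = c + (f t : ZMod n)
    have hrec : ∀ t : ZMod n, t = c + ((f t : ℕ) : ZMod n) := by
      intro t
      simp only [hf]
      rw [ZMod.natCast_zmod_val (t - c)]; ring
    have htaeq := hrec ta; rw [hfa] at htaeq
    have htbeq := hrec tb; rw [hfb] at htbeq
    have htceq := hrec tc; rw [hfc] at htceq
    have hva3 : vc ≤ n - 3 := by rw [← hfc]; exact hbound tc htc
    have hshift : ∀ u v : ℕ, u ≤ v → (c + (u : ZMod n)) + ((v - u : ℕ) : ZMod n)
        = c + (v : ZMod n) := by
      intro u v huv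
      have : ((u : ℕ) : ZMod n) + ((v - u : ℕ) : ZMod n) = ((v : ℕ) : ZMod n) := by
        rw [← Nat.cast_add]
        congr 1
        omega
      rw [add_assoc, this]
    have heab : tb = ta + ((vb - va : ℕ) : ZMod n) := by
      rw [htaeq, htbeq, hshift va vb (by omega)]
    have hebc : tc = tb + ((vc - vb : ℕ) : ZMod n) := by
      rw [htbeq, htceq, hshift vb vc (by omega)]
    have heac : tc = ta + ((vc - va : ℕ) : ZMod n) := by
      rw [htaeq, htceq, hshift va vc (by omega)]
    have h12 := nonadj' n hn (vb - va) (by omega) (by omega) ta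
    have h23 := nonadj' n hn (vc - vb) (by omega) (by omega) tb
    have h13 := nonadj' n hn (vc - va) (by omega) (by omega) ta
    rw [← heab] at h12
    rw [← hebc] at h23
    rw [← heac] at h13
    refine ⟨{ta, tb, tc}, ?_, ?_, ?_⟩
    · intro z hz
      simp only [Finset.mem_insert, Finset.mem_singleton] at hz
      rcases hz with rfl | rfl | rfl <;> assumption
    · rw [Finset.card_insert_of_notMem, Finset.card_insert_of_notMem,
        Finset.card_singleton]
      · simp only [Finset.mem_singleton]; exact h23.1
      · simp only [Finset.mem_insert, Finset.mem_singleton]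
        push_neg
        exact ⟨h12.1, h13.1⟩
    · intro a ha b hb
      simp only [Finset.mem_insert, Finset.mem_singleton] at ha hb
      rcases ha with rfl | rfl | rfl <;> rcases hb with rfl | rfl | rfl
      · exact (squaredCycle n).loopless.irrefl _
      · exact h12.2
      · exact h13.2
      · exact fun h => h12.2 h.symm
      · exact (squaredCycle n).loopless.irrefl _
      · exact h23.2
      · exact fun h => h13.2 h.symm
      · exact fun h => h23.2 h.symm
      · exact (squaredCycle n).loopless.irrefl _

theorem stmt18 (n : ℕ) (hn : 11 ≤ n) (σ : Finset (ZMod n))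
    (hface : IsFace n 3 σ) (h1 : (1 : ZMod n) ∉ σ)
    (hunmatched : ¬ IsFace n 3 (insert (1 : ZMod n) σ)) :
    n - 7 ≤ σ.card ∧ σ.card ≤ n - 3 := by
  haveI : NeZero n := ⟨by omega⟩
  have hcardZ : Fintype.card (ZMod n) = n := ZMod.card n
  obtain ⟨S0, hdisj0, hcard0, _⟩ := hface
  have hub : σ.card ≤ n - 3 := by
    have h1' : (S0 ∪ σ).card = S0.card + σ.card := Finset.card_union_of_disjoint hdisj0
    have h2' : (S0 ∪ σ).card ≤ Fintype.card (ZMod n) := Finset.card_le_univ _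
    omega
  refine ⟨?_, hub⟩
  by_contra hlb
  have hσ : σ.card + 8 ≤ n := by omega
  set A := insert (1 : ZMod n) σ with hA
  have hAcard : A.card = σ.card + 1 := Finset.card_insert_of_notMem h1
  set T := Finset.univ \ A with hTdef
  have hTcard : 7 ≤ T.card := by
    rw [hTdef, Finset.card_sdiff_of_subset (Finset.subset_univ A), Finset.card_univ, hcardZ, hAcard]
    omega
  obtain ⟨S, hST, hScard, hSindep⟩ := exists_indep_s18 n hn T hTcard
  apply hunmatched
  refine ⟨S, ?_, hScard, hSindep⟩
  rw [Finset.disjoint_left]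
  intro a haS haA
  have := hST haS
  rw [hTdef, Finset.mem_sdiff] at this
  exact this.2 haA
end
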